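/- Let p = 2n+1 be prime, let 𝒯 be the family of all subsets of ℤ_pⁿ of the form {(x₁,…,x₍ₙ₋₁₎, k + Σ_{i=1}^{n−1} εᵢ·(i+1)·xᵢ) : xᵢ ∈ ℤ_p} for some k ∈ ℤ_p and (ε₁,…,ε₍ₙ₋₁₎) ∈ {−1,1}^{n−1}. Then every S ∈ 𝒯 has a defining set for (S, 𝒯) of size at most 1 + ⌈(n−1)/⌊log₂ p⌋⌉: there exists D ⊆ S of that size such that S is the unique member of 𝒯 containing D. -/

import Mathlib

/-- The Cayley graph Γ(ℤ_{2n+1}ⁿ, 𝒰) with 𝒰 = {±e₁,…,±eₙ}. -/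
def cay (n : ℕ) : SimpleGraph (Fin n → ZMod (2 * n + 1)) where
  Adj x y := ∃ i : Fin n, x - y = Pi.single i 1 ∨ y - x = Pi.single i 1
  symm := by
    constructor
    rintro x y ⟨i, h | h⟩
    · exact ⟨i, Or.inr h⟩
    · exact ⟨i, Or.inl h⟩
  loopless := by
    constructor
    rintro x ⟨i, h | h⟩ <;>
    · have hn : 0 < n := i.pos
      haveI : Fact (1 < 2 * n + 1) := ⟨by omega⟩
      simp only [sub_self] at h
      have h1 := congrFun h i
      rw [Pi.zero_apply, Pi.single_eq_same] at h1
      exact one_ne_zero h1.symm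

instance (n : ℕ) : DecidableRel (cay n).Adj :=
  fun x y => Fintype.decidableExistsFintype (p := fun i : Fin n =>
    x - y = Pi.single i 1 ∨ y - x = Pi.single i 1)

/-- `S` is a dominating set of `G`. -/
def Dom {V : Type*} (G : SimpleGraph V) (S : Set V) : Prop :=
  ∀ v : V, ∃ u ∈ S, u = v ∨ G.Adj u v

/-- `S` is a perfect dominating set of `G`: every vertex is dominated by
exactly one element of `S`. -/
def PerfDom {V : Type*} (G : SimpleGraph V) (S : Set V) : Prop :=
  ∀ v : V, ∃! u : V, u ∈ S ∧ (u = v ∨ G.Adj u v)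

/-- The "linear" perfect dominating set determined by `k` and signs `ε`:
`{(x₁,…,xₙ₋₁, k + Σᵢ εᵢ·(i+1)·xᵢ)}` (0-based index `i : Fin m` has coefficient `i+2`). -/
def linSet (m : ℕ) (k : ZMod (2 * (m + 1) + 1)) (ε : Fin m → ZMod (2 * (m + 1) + 1)) :
    Set (Fin (m + 1) → ZMod (2 * (m + 1) + 1)) :=
  {v | v (Fin.last m) = k + ∑ i : Fin m, ε i * ((i : ℕ) + 2) * v i.castSucc}

/-- The family `𝒯` of all sets of the linear form. -/
def linFamily (m : ℕ) : Set (Set (Fin (m + 1) → ZMod (2 * (m + 1) + 1))) :=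
  {S | ∃ k ε, (∀ i, ε i = 1 ∨ ε i = -1) ∧ S = linSet m k ε}

/-!
A member `linSet m k ε` of the family is determined by `k` and the signs `ε`. Its point over the
origin determines `k`. Cut the `m` sign positions into blocks of `t = ⌊log₂ p⌋` consecutive
indices and, for each block, take the point of the set whose free coordinates satisfy
`(i + 2) xᵢ = 2 ^ (i % t)` on the block and vanish elsewhere. If it also lies in
`linSet m k ε'`, then `∑ (εᵢ - ε'ᵢ) 2 ^ (i % t) ≡ 0 (mod p)` over the block. The differences are
`0` or `±2`, `p` is odd and `2 ^ t ≤ p`, so this is an identity in `ℤ` between signed binary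
expansions with digits in `{-1, 0, 1}`, which forces `ε = ε'` on the block. This takes
`1 + ⌈m / t⌉` points.
-/

open Finset

section SignedBinary

variable {ι : Type*} {s : Finset ι} {r : ι → ℕ} {e : ι → ℤ}

lemma abs_sum_mul_two_pow_lt {t : ℕ} (hr : Set.InjOn r s) (hrt : ∀ i ∈ s, r i < t)
    (he : ∀ i ∈ s, |e i| ≤ 1) : |∑ i ∈ s, e i * 2 ^ r i| < 2 ^ t := by
  have hterm : ∀ i ∈ s, |e i * 2 ^ r i| ≤ 2 ^ r i := fun i hi => by
    rw [abs_mul, abs_pow, abs_two]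
    exact mul_le_of_le_one_left (by positivity) (he i hi)
  have hgeom : ∑ x ∈ s.image r, 2 ^ x < 2 ^ t :=
    Nat.geomSum_lt le_rfl fun x hx => by
      obtain ⟨i, hi, rfl⟩ := mem_image.mp hx
      exact hrt i hi
  calc |∑ i ∈ s, e i * 2 ^ r i| ≤ ∑ i ∈ s, |e i * 2 ^ r i| := abs_sum_le_sum_abs _ _
    _ ≤ ∑ i ∈ s, (2 : ℤ) ^ r i := sum_le_sum hterm
    _ = ((∑ x ∈ s.image r, 2 ^ x : ℕ) : ℤ) := by push_cast; rw [sum_image hr]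
    _ < 2 ^ t := by exact_mod_cast hgeom

lemma eq_zero_of_sum_mul_two_pow_eq_zero [DecidableEq ι] (hr : Set.InjOn r s)
    (he : ∀ i ∈ s, |e i| ≤ 1) (hsum : ∑ i ∈ s, e i * 2 ^ r i = 0) : ∀ i ∈ s, e i = 0 := by
  induction s using Finset.induction_on_max_value r with
  | empty => simp
  | insert a s has hmax ih =>
    rw [coe_insert, Set.injOn_insert (mod_cast has)] at hr
    have he' : ∀ i ∈ s, |e i| ≤ 1 := fun i hi => he i (mem_insert_of_mem hi)
    have hlt : ∀ i ∈ s, r i < r a := fun i hi =>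
      (hmax i hi).lt_of_ne fun h => hr.2 ⟨i, hi, h⟩
    have hrest := abs_sum_mul_two_pow_lt hr.1 hlt he'
    rw [sum_insert has, add_eq_zero_iff_eq_neg] at hsum
    have hea : e a = 0 := by
      by_contra hne
      have : (2 : ℤ) ^ r a ≤ |e a * 2 ^ r a| := by
        rw [abs_mul, abs_pow, abs_two]
        exact le_mul_of_one_le_left (by positivity) (Int.one_le_abs hne)
      rw [hsum, abs_neg] at this
      exact this.not_gt hrest
    rw [hea, zero_mul, zero_eq_neg] at hsum
    simpa [hea] using ih hr.1 he' hsum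

lemma eq_zero_of_sum_mul_two_pow_eq_zero_zmod [DecidableEq ι] {N t : ℕ} (hN : 2 ^ t ≤ N)
    (hr : Set.InjOn r s) (hrt : ∀ i ∈ s, r i < t) (he : ∀ i ∈ s, |e i| ≤ 1)
    (hsum : ∑ i ∈ s, (e i : ZMod N) * 2 ^ r i = 0) : ∀ i ∈ s, e i = 0 := by
  refine eq_zero_of_sum_mul_two_pow_eq_zero hr he (Int.eq_zero_of_abs_lt_dvd (m := N) ?_ ?_)
  · rw [← ZMod.intCast_zmod_eq_zero_iff_dvd]
    push_cast
    exact hsum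
  · exact (abs_sum_mul_two_pow_lt hr hrt he).trans_le (mod_cast hN)

lemma exists_sub_eq_two_mul_of_signs {R : Type*} [Ring R] {u v : R} (hu : u = 1 ∨ u = -1)
    (hv : v = 1 ∨ v = -1) : ∃ d : ℤ, |d| ≤ 1 ∧ u - v = 2 * d := by
  rcases hu with rfl | rfl <;> rcases hv with rfl | rfl
  exacts [⟨0, by norm_num⟩, ⟨1, by norm_num⟩, ⟨-1, by norm_num⟩, ⟨0, by norm_num⟩]

lemma eq_of_sum_sub_mul_two_pow_eq_zero [DecidableEq ι] {N t : ℕ} (hN : Odd N) (htN : 2 ^ t ≤ N)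
    (hr : Set.InjOn r s) (hrt : ∀ i ∈ s, r i < t) {ε ε' : ι → ZMod N}
    (hε : ∀ i ∈ s, ε i = 1 ∨ ε i = -1) (hε' : ∀ i ∈ s, ε' i = 1 ∨ ε' i = -1)
    (hsum : ∑ i ∈ s, (ε i - ε' i) * 2 ^ r i = 0) :
    ∀ i ∈ s, ε i = ε' i := by
  choose! d hd using fun i (hi : i ∈ s) => exists_sub_eq_two_mul_of_signs (hε i hi) (hε' i hi)
  have htwo : IsUnit (2 : ZMod N) := by
    exact_mod_cast (ZMod.isUnit_iff_coprime 2 N).mpr (Nat.coprime_two_left.mpr hN)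
  have hd0 : ∑ i ∈ s, (d i : ZMod N) * 2 ^ r i = 0 := by
    rw [← htwo.mul_right_eq_zero, mul_sum, ← hsum]
    exact sum_congr rfl fun i hi => by rw [(hd i hi).2, mul_assoc]
  intro i hi
  rw [← sub_eq_zero, (hd i hi).2,
    eq_zero_of_sum_mul_two_pow_eq_zero_zmod htN hr hrt (fun i hi => (hd i hi).1) hd0 i hi]
  simp

end SignedBinary

/-- Supported on the block `{i | i / t = b}`, with `(i + 2) * xᵢ = 2 ^ (i % t)` there, so that
it cancels the weights of `linSet`. -/
def blockVec (N : ℕ) {m : ℕ} (t b : ℕ) : Fin m → ZMod N := fun i =>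
  if (i : ℕ) / t = b then (((i : ℕ) : ZMod N) + 2)⁻¹ * 2 ^ ((i : ℕ) % t) else 0

lemma sum_mul_blockVec {N m : ℕ} (t b : ℕ) (hcop : ∀ i : Fin m, Nat.Coprime ((i : ℕ) + 2) N)
    (c : Fin m → ZMod N) :
    ∑ i : Fin m, c i * ((i : ℕ) + 2) * blockVec N t b i =
      ∑ i ∈ univ.filter (fun i : Fin m => (i : ℕ) / t = b), c i * 2 ^ ((i : ℕ) % t) := by
  rw [sum_filter]
  refine sum_congr rfl fun i _ => ?_
  have hinv := ZMod.coe_mul_inv_eq_one _ (hcop i)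
  push_cast at hinv
  unfold blockVec
  split_ifs
  · linear_combination c i * 2 ^ ((i : ℕ) % t) * hinv
  · rw [mul_zero]

lemma injOn_mod_of_div_eq {m : ℕ} (t b : ℕ) :
    Set.InjOn (fun i : Fin m => (i : ℕ) % t) {i | (i : ℕ) / t = b} := fun i hi j hj hij =>
  Fin.ext <| by rw [← Nat.div_add_mod i t, ← Nat.div_add_mod j t, hi, hj]; exact congrArg _ hij

section LinearFamily

variable {m : ℕ}

def linPoint (m : ℕ) (k : ZMod (2 * (m + 1) + 1)) (ε x : Fin m → ZMod (2 * (m + 1) + 1)) :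
    Fin (m + 1) → ZMod (2 * (m + 1) + 1) :=
  Fin.snoc x (k + ∑ i : Fin m, ε i * ((i : ℕ) + 2) * x i)

lemma linPoint_mem_linSet_iff {k k' : ZMod (2 * (m + 1) + 1)}
    {ε ε' x : Fin m → ZMod (2 * (m + 1) + 1)} :
    linPoint m k ε x ∈ linSet m k' ε' ↔
      k + ∑ i : Fin m, ε i * ((i : ℕ) + 2) * x i =
        k' + ∑ i : Fin m, ε' i * ((i : ℕ) + 2) * x i := by
  simp [linSet, linPoint]

lemma linPoint_mem_linSet (k : ZMod (2 * (m + 1) + 1)) (ε x : Fin m → ZMod (2 * (m + 1) + 1)) :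
    linPoint m k ε x ∈ linSet m k ε :=
  linPoint_mem_linSet_iff.mpr rfl

lemma sum_sub_mul_eq_zero_of_linPoint_mem {k : ZMod (2 * (m + 1) + 1)}
    {ε ε' x : Fin m → ZMod (2 * (m + 1) + 1)} (h : linPoint m k ε x ∈ linSet m k ε') :
    ∑ i : Fin m, (ε i - ε' i) * ((i : ℕ) + 2) * x i = 0 := by
  rw [linPoint_mem_linSet_iff, add_right_inj, ← sub_eq_zero, ← sum_sub_distrib] at h
  rw [← h]
  exact sum_congr rfl fun i _ => by ring

lemma eq_of_linPoint_blockVec_mem (hp : (2 * (m + 1) + 1).Prime) {t b : ℕ} (ht : 0 < t)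
    (htN : 2 ^ t ≤ 2 * (m + 1) + 1) {k : ZMod (2 * (m + 1) + 1)}
    {ε ε' : Fin m → ZMod (2 * (m + 1) + 1)} (hε : ∀ i, ε i = 1 ∨ ε i = -1)
    (hε' : ∀ i, ε' i = 1 ∨ ε' i = -1) (h : linPoint m k ε (blockVec _ t b) ∈ linSet m k ε')
    (i : Fin m) (hi : (i : ℕ) / t = b) : ε i = ε' i := by
  have hcop (j : Fin m) : Nat.Coprime ((j : ℕ) + 2) (2 * (m + 1) + 1) :=
    (Nat.coprime_of_lt_prime (by omega) (by omega) hp).symm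
  have hsum := sum_sub_mul_eq_zero_of_linPoint_mem h
  rw [sum_mul_blockVec t b hcop] at hsum
  refine eq_of_sum_sub_mul_two_pow_eq_zero (odd_two_mul_add_one _) htN ?_
    (fun j _ => Nat.mod_lt _ ht) (fun j _ => hε j) (fun j _ => hε' j) hsum i (by simp [hi])
  exact (injOn_mod_of_div_eq t b).mono fun j hj => by simpa using hj

def blockDefiningSet (m t : ℕ) (k : ZMod (2 * (m + 1) + 1))
    (ε : Fin m → ZMod (2 * (m + 1) + 1)) :
    Finset (Fin (m + 1) → ZMod (2 * (m + 1) + 1)) :=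
  insert (linPoint m k ε 0) ((range (m ⌈/⌉ t)).image fun b => linPoint m k ε (blockVec _ t b))

lemma coe_blockDefiningSet_subset (t : ℕ) (k : ZMod (2 * (m + 1) + 1))
    (ε : Fin m → ZMod (2 * (m + 1) + 1)) :
    (↑(blockDefiningSet m t k ε) : Set _) ⊆ linSet m k ε := by
  intro v hv
  simp only [blockDefiningSet, coe_insert, coe_image, Set.mem_insert_iff, Set.mem_image] at hv
  obtain rfl | ⟨b, -, rfl⟩ := hv <;> exact linPoint_mem_linSet _ _ _

lemma ncard_blockDefiningSet_le (t : ℕ) (k : ZMod (2 * (m + 1) + 1))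
    (ε : Fin m → ZMod (2 * (m + 1) + 1)) :
    (blockDefiningSet m t k ε : Set (Fin (m + 1) → ZMod (2 * (m + 1) + 1))).ncard ≤
      1 + m ⌈/⌉ t := by
  rw [Set.ncard_coe_finset, blockDefiningSet, add_comm 1]
  exact (card_insert_le _ _).trans (Nat.succ_le_succ (card_image_le.trans (card_range _).le))

lemma eq_of_blockDefiningSet_subset (hp : (2 * (m + 1) + 1).Prime) {t : ℕ} (ht : 0 < t)
    (htN : 2 ^ t ≤ 2 * (m + 1) + 1) {k k' : ZMod (2 * (m + 1) + 1)}
    {ε ε' : Fin m → ZMod (2 * (m + 1) + 1)} (hε : ∀ i, ε i = 1 ∨ ε i = -1)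
    (hε' : ∀ i, ε' i = 1 ∨ ε' i = -1) (h : ↑(blockDefiningSet m t k ε) ⊆ linSet m k' ε') :
    k' = k ∧ ε' = ε := by
  have hk : k' = k := by
    have h0 := linPoint_mem_linSet_iff.mp (h (mem_insert_self _ _))
    simpa using h0.symm
  subst hk
  refine ⟨rfl, funext fun i =>
    (eq_of_linPoint_blockVec_mem (k := k') hp ht htN hε hε' ?_ i rfl).symm⟩
  have hb : (i : ℕ) / t < m ⌈/⌉ t :=
    Nat.div_lt_of_lt_mul (i.isLt.trans_le (by simpa using le_smul_ceilDiv (b := m) ht))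
  exact h (mem_insert_of_mem (mem_image_of_mem _ (mem_range.mpr hb)))

end LinearFamily

/-- For `p = 2n+1` prime (`n = m+1`), every member `S` of the family
`𝒯` of linear perfect dominating sets has a defining set for `(S, 𝒯)` of size at most
`1 + ⌈(n−1)/⌊log₂ p⌋⌉`. -/
theorem stmt13 (m : ℕ) (hp : Nat.Prime (2 * (m + 1) + 1))
    (S : Set (Fin (m + 1) → ZMod (2 * (m + 1) + 1))) (hS : S ∈ linFamily m) :
    ∃ D ⊆ S, D.ncard ≤ 1 + m ⌈/⌉ Nat.log 2 (2 * (m + 1) + 1) ∧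
      ∀ T ∈ linFamily m, D ⊆ T → T = S := by
  obtain ⟨k, ε, hε, rfl⟩ := hS
  set t := Nat.log 2 (2 * (m + 1) + 1)
  have ht : 0 < t := Nat.log_pos (by norm_num) (by omega)
  have htN : 2 ^ t ≤ 2 * (m + 1) + 1 := Nat.pow_log_le_self 2 (by omega)
  refine ⟨blockDefiningSet m t k ε, coe_blockDefiningSet_subset t k ε,
    ncard_blockDefiningSet_le t k ε, ?_⟩
  rintro T ⟨k', ε', hε', rfl⟩ hD
  obtain ⟨rfl, rfl⟩ := eq_of_blockDefiningSet_subset hp ht htN hε hε' hD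
  rfl
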